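/- Fix n ≥ 1 and an integer m ≥ 2. If two permutations π and σ of {1,…,n} have the same set of ranked diagram cells of rank at most m−3 (i.e., the same cells, each with the same rank) and the same set of B_m-pairs, then π = σ. -/
import Mathlib


/-- The rank of a cell `(i,j)`: the number of indices `k < i` with `π k < j`. -/
noncomputable def diagRank (n : ℕ) (π : Equiv.Perm (Fin n)) (i j : Fin n) : ℕ :=
  Nat.card {k : Fin n // k < i ∧ π k < j}

/-- `(i,j)` is a B_m-pair of `π`: `i < j`, `π i < π j`, and there are at least `m - 2`
indices `k < i` with `π k < π i`. -/
def BmPair (n m : ℕ) (π : Equiv.Perm (Fin n)) (i j : Fin n) : Prop :=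
  i < j ∧ π i < π j ∧ m - 2 ≤ Nat.card {k : Fin n // k < i ∧ π k < π i}

lemma key_aux (n m : ℕ) (π σ : Equiv.Perm (Fin n))
    (hdiag : ∀ i j : Fin n, ∀ r : ℕ,
      (j < σ i ∧ i < σ.symm j ∧ diagRank n σ i j = r ∧ (r : ℤ) ≤ (m : ℤ) - 3) →
      (j < π i ∧ i < π.symm j ∧ diagRank n π i j = r ∧ (r : ℤ) ≤ (m : ℤ) - 3))
    (hB : ∀ i j : Fin n, BmPair n m π i j ↔ BmPair n m σ i j)
    (i : Fin n) (hmin : ∀ k, k < i → π k = σ k) (hlt : π i < σ i) : False := by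
  -- Step 2 : i < σ.symm (π i)
  have h2 : i < σ.symm (π i) := by
    rcases lt_trichotomy (σ.symm (π i)) i with h | h | h
    · have hk : π (σ.symm (π i)) = π i := (hmin _ h).trans (σ.apply_symm_apply _)
      exact absurd (π.injective hk) (ne_of_lt h)
    · have h5 : π i = σ i := (Equiv.symm_apply_eq σ).mp h
      rw [h5] at hlt
      exact absurd hlt (lt_irrefl _)
    · exact h
  -- Step 3 : the rank of the cell (i, π i) of σ is at least m - 2
  have hr : m - 2 ≤ diagRank n σ i (π i) := by
    by_contra hr
    push_neg at hr
    have hz : ((diagRank n σ i (π i) : ℤ)) ≤ (m : ℤ) - 3 := by omega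
    have := hdiag i (π i) (diagRank n σ i (π i)) ⟨hlt, h2, rfl, hz⟩
    exact lt_irrefl _ this.1
  -- transfer to counts for π and σ at (i, π i) resp. (i, σ i)
  have hrπ : m - 2 ≤ Nat.card {k : Fin n // k < i ∧ π k < π i} := by
    have hEq : Nat.card {k : Fin n // k < i ∧ σ k < π i}
        = Nat.card {k : Fin n // k < i ∧ π k < π i} := by
      apply Nat.card_congr
      apply Equiv.subtypeEquivRight
      intro k
      constructor
      · rintro ⟨h1, h3⟩; exact ⟨h1, by rwa [hmin _ h1]⟩
      · rintro ⟨h1, h3⟩; exact ⟨h1, by rwa [← hmin _ h1]⟩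
    have : diagRank n σ i (π i) = Nat.card {k : Fin n // k < i ∧ σ k < π i} := rfl
    omega
  have hrσ : m - 2 ≤ Nat.card {k : Fin n // k < i ∧ σ k < σ i} := by
    have hmono : Nat.card {k : Fin n // k < i ∧ σ k < π i}
        ≤ Nat.card {k : Fin n // k < i ∧ σ k < σ i} := by
      rw [Nat.card_eq_fintype_card, Nat.card_eq_fintype_card]
      exact Fintype.card_subtype_mono _ _ (fun k hk => ⟨hk.1, lt_trans hk.2 hlt⟩)
    have : diagRank n σ i (π i) = Nat.card {k : Fin n // k < i ∧ σ k < π i} := rfl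
    omega
  -- Step 4/5 : the two B-pair sets from row i coincide
  set Sπ : Finset (Fin n) := Finset.univ.filter (fun j => i < j ∧ π i < π j) with hSπ
  set Sσ : Finset (Fin n) := Finset.univ.filter (fun j => i < j ∧ σ i < σ j) with hSσ
  have hSS : Sπ = Sσ := by
    ext j
    simp only [hSπ, hSσ, Finset.mem_filter, Finset.mem_univ, true_and]
    constructor
    · rintro ⟨h1, h3⟩
      have := (hB i j).mp ⟨h1, h3, hrπ⟩
      exact ⟨this.1, this.2.1⟩
    · rintro ⟨h1, h3⟩
      have := (hB i j).mpr ⟨h1, h3, hrσ⟩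
      exact ⟨this.1, this.2.1⟩
  -- Step 6 : value-side sets
  set Aπ : Finset (Fin n) := Finset.univ.filter (fun u => π i < u ∧ i < π.symm u) with hAπ
  set Aσ : Finset (Fin n) := Finset.univ.filter (fun u => σ i < u ∧ i < σ.symm u) with hAσ
  have hcπ : Sπ.card = Aπ.card := by
    have himg : Sπ = Aπ.image π.symm := by
      ext j
      simp only [hSπ, hAπ, Finset.mem_filter, Finset.mem_univ, true_and,
        Finset.mem_image]
      constructor
      · rintro ⟨h1, h3⟩
        exact ⟨π j, ⟨⟨h3, by simpa using h1⟩, by simp⟩⟩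
      · rintro ⟨u, ⟨h3, h1⟩, rfl⟩
        exact ⟨h1, by simpa using h3⟩
    rw [himg, Finset.card_image_of_injective _ π.symm.injective]
  have hcσ : Sσ.card = Aσ.card := by
    have himg : Sσ = Aσ.image σ.symm := by
      ext j
      simp only [hSσ, hAσ, Finset.mem_filter, Finset.mem_univ, true_and,
        Finset.mem_image]
      constructor
      · rintro ⟨h1, h3⟩
        exact ⟨σ j, ⟨⟨h3, by simpa using h1⟩, by simp⟩⟩
      · rintro ⟨u, ⟨h3, h1⟩, rfl⟩
        exact ⟨h1, by simpa using h3⟩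
    rw [himg, Finset.card_image_of_injective _ σ.symm.injective]
  -- Step 7 : Aσ ⊊ Aπ
  have hsub : Aσ ⊆ Aπ := by
    intro u hu
    simp only [hAσ, Finset.mem_filter, Finset.mem_univ, true_and] at hu
    obtain ⟨h3, h1⟩ := hu
    simp only [hAπ, Finset.mem_filter, Finset.mem_univ, true_and]
    refine ⟨lt_trans hlt h3, ?_⟩
    rcases lt_trichotomy (π.symm u) i with h | h | h
    · exfalso
      have h5 : σ (π.symm u) = u := (hmin _ h).symm.trans (π.apply_symm_apply _)
      have h6 : σ.symm u = π.symm u := (Equiv.symm_apply_eq σ).mpr h5.symm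
      rw [h6] at h1
      exact lt_asymm h h1
    · exfalso
      have hu : u = π i := (Equiv.symm_apply_eq π).mp h
      have h6 := lt_trans hlt h3
      rw [hu] at h6
      exact absurd h6 (lt_irrefl _)
    · exact h
  have hmem : σ i ∈ Aπ := by
    simp only [hAπ, Finset.mem_filter, Finset.mem_univ, true_and]
    refine ⟨hlt, ?_⟩
    rcases lt_trichotomy (π.symm (σ i)) i with h | h | h
    · exfalso
      have hk : σ (π.symm (σ i)) = σ i := (hmin _ h).symm.trans (π.apply_symm_apply _)
      exact absurd (σ.injective hk) (ne_of_lt h)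
    · exfalso
      have h5 : σ i = π i := (Equiv.symm_apply_eq π).mp h
      rw [h5] at hlt
      exact absurd hlt (lt_irrefl _)
    · exact h
  have hnmem : σ i ∉ Aσ := by
    simp only [hAσ, Finset.mem_filter, Finset.mem_univ, true_and]
    intro h
    exact lt_irrefl _ h.1
  have hlt' : Aσ.card < Aπ.card :=
    Finset.card_lt_card ((Finset.ssubset_iff_of_subset hsub).mpr ⟨σ i, hmem, hnmem⟩)
  rw [hSS] at hcπ
  omega

theorem perm_determined_by_low_rank_cells_and_Bm_pairs (n m : ℕ) (hn : 1 ≤ n) (hm : 2 ≤ m)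
    (π σ : Equiv.Perm (Fin n))
    (hdiag : ∀ i j : Fin n, ∀ r : ℕ,
      (j < π i ∧ i < π.symm j ∧ diagRank n π i j = r ∧ (r : ℤ) ≤ (m : ℤ) - 3) ↔
      (j < σ i ∧ i < σ.symm j ∧ diagRank n σ i j = r ∧ (r : ℤ) ≤ (m : ℤ) - 3))
    (hB : ∀ i j : Fin n, BmPair n m π i j ↔ BmPair n m σ i j) :
    π = σ := by
  by_contra hne
  have hne' : ∃ i, π i ≠ σ i := by
    by_contra h
    push_neg at h
    exact hne (Equiv.ext h)
  set S : Finset (Fin n) := Finset.univ.filter (fun i => π i ≠ σ i) with hS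
  have hSne : S.Nonempty := by
    obtain ⟨i, hi⟩ := hne'
    exact ⟨i, by simp [hS, hi]⟩
  set i := S.min' hSne with hi
  have hiS : i ∈ S := S.min'_mem hSne
  have hine : π i ≠ σ i := by
    simpa [hS] using hiS
  have hmin : ∀ k, k < i → π k = σ k := by
    intro k hk
    by_contra h
    have : i ≤ k := S.min'_le k (by simp [hS, h])
    omega
  rcases lt_or_gt_of_ne hine with h | h
  · exact absurd (key_aux n m π σ (fun a b r => (hdiag a b r).mpr) hB i hmin h) id
  · exact absurd (key_aux n m σ π (fun a b r => (hdiag a b r).mp)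
      (fun a b => (hB a b).symm) i (fun k hk => (hmin k hk).symm) h) id
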